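/- arXiv:1502.05584 — 2 statements merged into one kernel-verified Lean document; each statement's English description precedes it below -/
import Mathlib

section
/- Let W₁, W₂ be independent exponential random variables with rate 1, and let U be uniform on [0,1], independent of (W₁,W₂). Then (1-U)(W₁+W₂) is exponentially distributed with rate 1. -/
/-!
The sum `S = W₁ + W₂` has tail `P(S > s) = (1 + s) e^{-s}`, and `V = 1 - U` is again uniform on
`[0, 1]` and independent of `S`. Conditioning on `V` gives
`P(V S > t) = ∫₀¹ (1 + t/v) e^{-t/v} dv`, and `v ↦ v e^{-t/v}` is an antiderivative of this
integrand that vanishes at `0`, so the integral is `e^{-t}`.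
-/

open MeasureTheory ProbabilityTheory Real Set Filter Topology

lemma hasDerivAt_mul_exp_neg_div (t : ℝ) {v : ℝ} (hv : v ≠ 0) :
    HasDerivAt (fun v => v * exp (-(t / v))) ((1 + t / v) * exp (-(t / v))) v := by
  have h : HasDerivAt (fun y => y * exp (-t * y⁻¹))
      (1 * exp (-t * v⁻¹) + v * (exp (-t * v⁻¹) * (-t * -(v ^ 2)⁻¹))) v :=
    (hasDerivAt_id' v).mul ((hasDerivAt_inv hv).const_mul (-t)).exp
  convert h using 1
  · ext y; ring_nf
  · field_simp

lemma continuousOn_mul_exp_neg_div {t : ℝ} (ht : 0 ≤ t) :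
    ContinuousOn (fun v => v * exp (-(t / v))) (Ici 0) := by
  intro v hv
  rcases (mem_Ici.1 hv).eq_or_lt with rfl | hv
  · have hle : ∀ᶠ v in 𝓝[Ici 0] (0 : ℝ), ‖v * exp (-(t / v))‖ ≤ v := by
      filter_upwards [self_mem_nhdsWithin] with v (hv : 0 ≤ v)
      rw [norm_mul, norm_of_nonneg hv, norm_of_nonneg (exp_pos _).le]
      exact mul_le_of_le_one_right hv (exp_le_one_iff.2 (neg_nonpos.2 (div_nonneg ht hv)))
    simpa [ContinuousWithinAt] using
      squeeze_zero_norm' hle (tendsto_nhdsWithin_of_tendsto_nhds tendsto_id)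
  · exact (hasDerivAt_mul_exp_neg_div t hv.ne').continuousAt.continuousWithinAt

lemma integrableOn_one_add_div_mul_exp_neg_div {t : ℝ} (ht : 0 ≤ t) (b : ℝ) :
    IntegrableOn (fun v => (1 + t / v) * exp (-(t / v))) (Ioc 0 b) :=
  intervalIntegral.integrableOn_deriv_of_nonneg
    ((continuousOn_mul_exp_neg_div ht).mono Icc_subset_Ici_self)
    (fun v hv => hasDerivAt_mul_exp_neg_div t hv.1.ne') (fun v hv => by have := hv.1; positivity)

lemma integral_one_add_div_mul_exp_neg_div {t b : ℝ} (ht : 0 ≤ t) (hb : 0 ≤ b) :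
    ∫ v in 0..b, (1 + t / v) * exp (-(t / v)) = b * exp (-(t / b)) := by
  rw [intervalIntegral.integral_eq_sub_of_hasDerivAt_of_le hb
    ((continuousOn_mul_exp_neg_div ht).mono Icc_subset_Ici_self)
    (fun v hv => hasDerivAt_mul_exp_neg_div t hv.1.ne')
    ((intervalIntegrable_iff_integrableOn_Ioc_of_le hb).2
      (integrableOn_one_add_div_mul_exp_neg_div ht b)), zero_mul, sub_zero]

lemma map_const_sub_volume_restrict_Icc (a b c : ℝ) :
    (volume.restrict (Icc a b)).map (fun x => c - x) = volume.restrict (Icc (c - b) (c - a)) := by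
  have := (Measure.measurePreserving_sub_left volume c).restrict_preimage
    (measurableSet_Icc (a := c - b) (b := c - a))
  rw [preimage_const_sub_Icc, sub_sub_cancel, sub_sub_cancel] at this
  exact this.map_eq

lemma prob_Ioi_eq_one_of_le {α : Type*} [Preorder α] [MeasurableSpace α] {ν : Measure α}
    [IsZeroOrProbabilityMeasure ν] {a b : α} (hab : a ≤ b) (hb : ν (Ioi b) = 1) :
    ν (Ioi a) = 1 :=
  one_le_prob_iff.1 (hb ▸ measure_mono (Ioi_subset_Ioi hab))

namespace ProbabilityTheory

lemma expMeasure_Ioi {r t : ℝ} (hr : 0 < r) (ht : 0 ≤ t) :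
    expMeasure r (Ioi t) = ENNReal.ofReal (exp (-(r * t))) := by
  have := isProbabilityMeasure_expMeasure hr
  have hexp : exp (-(r * t)) ≤ 1 := exp_le_one_iff.2 (neg_nonpos.2 (mul_nonneg hr.le ht))
  rw [← compl_Iic, prob_compl_eq_one_sub measurableSet_Iic, ← ofReal_cdf, cdf_expMeasure_eq hr,
    if_pos ht, ← ENNReal.ofReal_one, ← ENNReal.ofReal_sub _ (sub_nonneg.2 hexp), sub_sub_cancel]

lemma expMeasure_Ioi_of_nonpos {r t : ℝ} (hr : 0 < r) (ht : t ≤ 0) : expMeasure r (Ioi t) = 1 :=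
  have := isProbabilityMeasure_expMeasure hr
  prob_Ioi_eq_one_of_le ht (by rw [expMeasure_Ioi hr le_rfl]; simp)

lemma eq_expMeasure_of_Ioi {ν : Measure ℝ} [IsProbabilityMeasure ν] {r : ℝ} (hr : 0 < r)
    (hν : ∀ t, 0 ≤ t → ν (Ioi t) = ENNReal.ofReal (exp (-(r * t)))) : ν = expMeasure r := by
  have := isProbabilityMeasure_expMeasure hr
  have tail_eq (t : ℝ) : ν (Ioi t) = expMeasure r (Ioi t) := by
    rcases le_or_gt 0 t with ht | ht
    · rw [hν t ht, expMeasure_Ioi hr ht]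
    · rw [expMeasure_Ioi_of_nonpos hr ht.le]
      exact prob_Ioi_eq_one_of_le ht.le (by rw [hν 0 le_rfl]; simp)
  refine Measure.ext_of_Iic _ _ fun a => ?_
  rw [← compl_Ioi, prob_compl_eq_one_sub measurableSet_Ioi, prob_compl_eq_one_sub measurableSet_Ioi,
    tail_eq]

lemma map_eq_expMeasure {Ω : Type*} [MeasurableSpace Ω] {μ : Measure Ω} [IsProbabilityMeasure μ]
    {W : Ω → ℝ} {r : ℝ} (hr : 0 < r) (hW : Measurable W)
    (hW_tail : ∀ t, 0 ≤ t → μ {ω | t < W ω} = ENNReal.ofReal (exp (-(r * t)))) :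
    μ.map W = expMeasure r := by
  have := Measure.isProbabilityMeasure_map (μ := μ) hW.aemeasurable
  exact eq_expMeasure_of_Ioi hr fun t ht => by
    rw [Measure.map_apply hW measurableSet_Ioi]
    exact hW_tail t ht

lemma expMeasure_conv_expMeasure_Ioi {s : ℝ} (hs : 0 ≤ s) :
    (expMeasure 1 ∗ expMeasure 1) (Ioi s) = ENNReal.ofReal ((1 + s) * exp (-s)) := by
  have := isProbabilityMeasure_expMeasure one_pos
  rw [Measure.conv, Measure.map_apply measurable_add measurableSet_Ioi,
    Measure.prod_apply (measurable_add measurableSet_Ioi)]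
  have slice (x : ℝ) : Prod.mk x ⁻¹' ((fun p : ℝ × ℝ => p.1 + p.2) ⁻¹' Ioi s) = Ioi (s - x) := by
    ext y; simp [sub_lt_iff_lt_add']
  simp_rw [slice]
  rw [← lintegral_add_compl _ measurableSet_Iic, compl_Iic]
  have h_le : ∫⁻ x in Iic s, expMeasure 1 (Ioi (s - x)) ∂expMeasure 1
      = ENNReal.ofReal (s * exp (-s)) := by
    have hpdf (x : ℝ) : exponentialPDF 1 x * ENNReal.ofReal (exp (-(1 * (s - x))))
        = (Ici 0).indicator (fun _ => ENNReal.ofReal (exp (-s))) x := by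
      rcases lt_or_ge x 0 with hx0 | hx0
      · simp [exponentialPDF_of_neg hx0, hx0]
      · rw [exponentialPDF_of_nonneg hx0, indicator_of_mem (mem_Ici.2 hx0),
          ← ENNReal.ofReal_mul (by positivity), one_mul, one_mul, one_mul, ← exp_add]
        ring_nf
    have hpdf_meas : Measurable (exponentialPDF 1) :=
      (measurable_exponentialPDFReal 1).ennreal_ofReal
    rw [setLIntegral_congr_fun measurableSet_Iic
      (fun x hx => expMeasure_Ioi one_pos (sub_nonneg.2 hx))]
    change ∫⁻ x in Iic s, _ ∂(volume.withDensity (exponentialPDF 1)) = _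
    rw [setLIntegral_withDensity_eq_setLIntegral_mul _ hpdf_meas (by fun_prop) measurableSet_Iic]
    simp only [Pi.mul_apply, hpdf]
    rw [lintegral_indicator_const measurableSet_Ici,
      Measure.restrict_apply measurableSet_Ici, Ici_inter_Iic, volume_Icc, sub_zero,
      ← ENNReal.ofReal_mul (exp_pos _).le, mul_comm]
  have h_gt : ∫⁻ x in Ioi s, expMeasure 1 (Ioi (s - x)) ∂expMeasure 1
      = ENNReal.ofReal (exp (-s)) := by
    rw [setLIntegral_congr_fun measurableSet_Ioi
        (fun x hx => expMeasure_Ioi_of_nonpos one_pos (sub_nonpos.2 (mem_Ioi.1 hx).le)),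
      setLIntegral_const, one_mul, expMeasure_Ioi one_pos hs, one_mul]
  rw [h_le, h_gt, ← ENNReal.ofReal_add (by positivity) (by positivity)]
  congr 1
  ring

lemma volume_Icc_mconv_expMeasure_conv_expMeasure :
    volume.restrict (Icc (0 : ℝ) 1) ∗ₘ (expMeasure 1 ∗ expMeasure 1) = expMeasure 1 := by
  have := isProbabilityMeasure_expMeasure one_pos
  have : IsProbabilityMeasure (volume.restrict (Icc (0 : ℝ) 1)) := ⟨by simp⟩
  refine eq_expMeasure_of_Ioi one_pos fun t ht => ?_
  rw [Measure.mconv, Measure.map_apply measurable_mul measurableSet_Ioi,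
    Measure.prod_apply (measurable_mul measurableSet_Ioi),
    ← Measure.restrict_congr_set Ioc_ae_eq_Icc]
  have slice (v : ℝ) (hv : v ∈ Ioc (0 : ℝ) 1) :
      (expMeasure 1 ∗ expMeasure 1) (Prod.mk v ⁻¹' ((fun p : ℝ × ℝ => p.1 * p.2) ⁻¹' Ioi t))
        = ENNReal.ofReal ((1 + t / v) * exp (-(t / v))) := by
    have : Prod.mk v ⁻¹' ((fun p : ℝ × ℝ => p.1 * p.2) ⁻¹' Ioi t) = Ioi (t / v) := by
      ext y; simp [div_lt_iff₀' hv.1]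
    rw [this, expMeasure_conv_expMeasure_Ioi (div_nonneg ht hv.1.le)]
  rw [setLIntegral_congr_fun measurableSet_Ioc slice,
    ← ofReal_integral_eq_lintegral_ofReal (integrableOn_one_add_div_mul_exp_neg_div ht 1)
      (ae_restrict_of_forall_mem measurableSet_Ioc fun v hv => by have := hv.1; positivity),
    ← intervalIntegral.integral_of_le zero_le_one,
    integral_one_add_div_mul_exp_neg_div ht zero_le_one,
    one_mul, div_one, one_mul]

end ProbabilityTheory

/-- If W₁, W₂ are independent Exp(1) random variables and U is uniform on [0,1],
with (W₁, W₂, U) independent, then (1-U)(W₁+W₂) is Exp(1). -/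
theorem one_sub_unif_mul_sum_exp_is_exponential
    {Ω : Type*} [MeasurableSpace Ω] (μ : Measure Ω) [IsProbabilityMeasure μ]
    (W₁ W₂ U : Ω → ℝ) (hW₁ : Measurable W₁) (hW₂ : Measurable W₂) (hU : Measurable U)
    (hlawW₁ : ∀ t : ℝ, 0 ≤ t → μ {ω | t < W₁ ω} = ENNReal.ofReal (Real.exp (-t)))
    (hlawW₂ : ∀ t : ℝ, 0 ≤ t → μ {ω | t < W₂ ω} = ENNReal.ofReal (Real.exp (-t)))
    (hlawU : Measure.map U μ = volume.restrict (Set.Icc (0:ℝ) 1))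
    (hindep : iIndepFun ![W₁, W₂, U] μ) :
    ∀ t : ℝ, 0 ≤ t →
      μ {ω | t < (1 - U ω) * (W₁ ω + W₂ ω)} = ENNReal.ofReal (Real.exp (-t)) := by
  intro t ht
  have hE₁ : μ.map W₁ = expMeasure 1 := map_eq_expMeasure one_pos hW₁ (by simpa using hlawW₁)
  have hE₂ : μ.map W₂ = expMeasure 1 := map_eq_expMeasure one_pos hW₂ (by simpa using hlawW₂)
  have hmeas (i : Fin 3) : Measurable (![W₁, W₂, U] i) := by fin_cases i <;> assumption
  have hW₁₂ : IndepFun W₁ W₂ μ := hindep.indepFun (i := 0) (j := 1) (by decide)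
  have hV_S : IndepFun ((1 - ·) ∘ U) (W₁ + W₂) μ :=
    (hindep.indepFun_add_left hmeas 0 1 2 (by decide) (by decide)).symm.comp
      (measurable_const_sub 1) measurable_id
  have hV : μ.map ((1 - ·) ∘ U) = volume.restrict (Icc 0 1) := by
    rw [← Measure.map_map (measurable_const_sub 1) hU, hlawU, map_const_sub_volume_restrict_Icc,
      sub_zero, sub_self]
  have hVS_law : μ.map ((1 - ·) ∘ U * (W₁ + W₂)) = expMeasure 1 := by
    rw [hV_S.map_mul_eq_map_mconv_map ((measurable_const_sub 1).comp hU) (hW₁.add hW₂), hV,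
      hW₁₂.map_add_eq_map_conv_map hW₁ hW₂, hE₁, hE₂, volume_Icc_mconv_expMeasure_conv_expMeasure]
  calc μ {ω | t < (1 - U ω) * (W₁ ω + W₂ ω)} = μ.map ((1 - ·) ∘ U * (W₁ + W₂)) (Ioi t) :=
        (Measure.map_apply (((measurable_const_sub 1).comp hU).mul (hW₁.add hW₂))
          measurableSet_Ioi).symm
    _ = ENNReal.ofReal (exp (-t)) := by rw [hVS_law, expMeasure_Ioi one_pos ht, one_mul]
end

section
/- Let a, b ≥ 1 be reals and t ∈ [0,1]. Then (a+b)/(t(a+b) + 1 - t) ≤ a + b/(1+t). -/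
/-- For a, b ≥ 1 and t ∈ [0,1], (a+b)/(t(a+b)+1-t) ≤ a + b/(1+t). -/
theorem conductance_recursion_bound (a b t : ℝ)
    (ha : 1 ≤ a) (hb : 1 ≤ b) (ht0 : 0 ≤ t) (ht1 : t ≤ 1) :
    (a + b) / (t * (a + b) + 1 - t) ≤ a + b / (1 + t) := by
  have hD : (0:ℝ) < t * (a + b) + 1 - t := by nlinarith
  have h1t : (0:ℝ) < 1 + t := by linarith
  rw [div_le_iff₀ hD, add_mul, div_mul_eq_mul_div, ← sub_le_iff_le_add', le_div_iff₀ h1t]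
  nlinarith [mul_nonneg ht0 (sub_nonneg.2 ha), mul_nonneg ht0 (sub_nonneg.2 hb),
    mul_nonneg (mul_nonneg ht0 ht0) (sub_nonneg.2 ha),
    mul_nonneg (sub_nonneg.2 ht1) (sub_nonneg.2 hb),
    mul_nonneg (mul_nonneg ht0 (sub_nonneg.2 ht1)) (sub_nonneg.2 ha),
    mul_nonneg (mul_nonneg ht0 (sub_nonneg.2 ht1)) (sub_nonneg.2 hb)]
end
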